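/- Let n ≥ 2, let 𝒪 ⊂ ℝⁿ be open, and let f : 𝒪 × S^{n-1} → [0,∞) be a nonnegative upper semicontinuous function (with respect to the product topology, S^{n-1} being the unit sphere of ℝⁿ). Fix x₀ ∈ 𝒪 and ε > 0, and suppose that the set {ξ ∈ S^{n-1} : f(x₀,ξ) ≠ 0} has surface measure at most ε/2. Then for every ρ > 0 there exist an open neighborhood 𝒩 ⊂ 𝒪 of x₀ and an open set Ω_b ⊂ S^{n-1} such that f(x,ξ) ≤ ρ for every (x,ξ) ∈ 𝒩 × (S^{n-1} ∖ Ω_b), and the surface measure of Ω_b is at most ε. -/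
import Mathlib

open MeasureTheory

/-- the localization lemma (Lemma 2.3 / Lemma 3.1-type) for upper
semicontinuous functions on `𝒪 × S^{n-1}`: if the set of directions where
`f(x₀, ·)` is nonzero has surface measure at most `ε/2`, then for every `ρ > 0`
there are an open neighborhood `𝒩 ⊆ 𝒪` of `x₀` and an open subset `Ω_b` of the
sphere of surface measure at most `ε` such that `f ≤ ρ` on `𝒩 × (S^{n-1} ∖ Ω_b)`.
Here the surface measure on the unit sphere is `volume.toSphere`. -/
theorem stmt_0 (n : ℕ) (hn : 2 ≤ n)
    (O : Set (EuclideanSpace ℝ (Fin n))) (hO : IsOpen O)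
    (f : EuclideanSpace ℝ (Fin n) → Metric.sphere (0 : EuclideanSpace ℝ (Fin n)) 1 → ℝ)
    (hf_nonneg : ∀ x ∈ O, ∀ ξ, 0 ≤ f x ξ)
    (hf_usc : UpperSemicontinuousOn
      (fun p : EuclideanSpace ℝ (Fin n) × Metric.sphere (0 : EuclideanSpace ℝ (Fin n)) 1 =>
        f p.1 p.2) (O ×ˢ Set.univ))
    (x₀ : EuclideanSpace ℝ (Fin n)) (hx₀ : x₀ ∈ O) (ε : ℝ) (hε : 0 < ε)
    (hsmall : (volume : Measure (EuclideanSpace ℝ (Fin n))).toSphere {ξ | f x₀ ξ ≠ 0}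
      ≤ ENNReal.ofReal (ε / 2))
    (ρ : ℝ) (hρ : 0 < ρ) :
    ∃ N : Set (EuclideanSpace ℝ (Fin n)), IsOpen N ∧ x₀ ∈ N ∧ N ⊆ O ∧
      ∃ Ω : Set (Metric.sphere (0 : EuclideanSpace ℝ (Fin n)) 1), IsOpen Ω ∧
        (volume : Measure (EuclideanSpace ℝ (Fin n))).toSphere Ω ≤ ENNReal.ofReal ε ∧
        ∀ x ∈ N, ∀ ξ, ξ ∉ Ω → f x ξ ≤ ρ := by
  set μ := (volume : Measure (EuclideanSpace ℝ (Fin n))).toSphere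
  set A : Set (Metric.sphere (0 : EuclideanSpace ℝ (Fin n)) 1) := {ξ | f x₀ ξ ≠ 0}
  -- choose an open superset U of A with μ U < ε
  have hlt : μ A < ENNReal.ofReal ε :=
    lt_of_le_of_lt hsmall (by
      exact ENNReal.ofReal_lt_ofReal_iff hε |>.2 (by linarith))
  obtain ⟨U, hAU, hUopen, hUlt⟩ := A.exists_isOpen_lt_of_lt _ hlt
  -- the complement K of U is compact
  have hKcl : IsClosed Uᶜ := hUopen.isClosed_compl
  have hKcompact : IsCompact Uᶜ := hKcl.isCompact
  -- product set is open
  have hsopen : IsOpen (O ×ˢ (Set.univ : Set (Metric.sphere (0 : EuclideanSpace ℝ (Fin n)) 1))) :=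
    hO.prod isOpen_univ
  -- for each ξ ∉ U, find product neighborhood where f < ρ
  have key : ∀ ξ : Metric.sphere (0 : EuclideanSpace ℝ (Fin n)) 1, ξ ∉ U →
      ∃ V W, IsOpen V ∧ IsOpen W ∧ x₀ ∈ V ∧ ξ ∈ W ∧
        ∀ x ∈ V, ∀ η ∈ W, f x η < ρ := by
    intro ξ hξ
    have hmem : (x₀, ξ) ∈ O ×ˢ (Set.univ : Set (Metric.sphere (0 : EuclideanSpace ℝ (Fin n)) 1)) :=
      ⟨hx₀, Set.mem_univ _⟩
    have husc := hf_usc _ hmem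
    have hval : f x₀ ξ < ρ := by
      have : f x₀ ξ = 0 := by
        by_contra h
        exact hξ (hAU h)
      simpa [this] using hρ
    have hev := husc ρ hval
    rw [nhdsWithin_eq_nhds.2 (hsopen.mem_nhds hmem)] at hev
    rcases mem_nhds_prod_iff'.1 hev with ⟨V, W, hVopen, hxV, hWopen, hξW, hVW⟩
    exact ⟨V, W, hVopen, hWopen, hxV, hξW, fun x hx η hη => hVW (Set.mk_mem_prod hx hη)⟩
  choose V W hVopen hWopen hxV hξW hVW using key
  -- cover Uᶜ by finitely many W ξ
  obtain ⟨t, ht⟩ := hKcompact.elim_nhds_subcover' (fun ξ hξ => W ξ hξ)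
    (fun ξ hξ => (hWopen ξ hξ).mem_nhds (hξW ξ hξ))
  refine ⟨O ∩ ⋂ ξ ∈ t, V ξ ξ.2, ?_, ⟨hx₀, ?_⟩, Set.inter_subset_left, U, hUopen, hUlt.le, ?_⟩
  · exact hO.inter (isOpen_biInter_finset fun ξ _ => hVopen ξ ξ.2)
  · exact Set.mem_iInter₂.2 fun ξ _ => hxV ξ ξ.2
  · intro x hx ξ hξ
    have hξK : ξ ∈ Uᶜ := hξ
    rcases Set.mem_iUnion₂.1 (ht hξK) with ⟨η, hη, hξW'⟩
    have hxV' : x ∈ V η η.2 := Set.mem_iInter₂.1 hx.2 η hη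
    exact (hVW η η.2 x hxV' ξ hξW').le
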